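/- Let F be a field of characteristic different from 2, let e ∈ F be a non-square, and let K be a field with an F-algebra structure containing an element λ with λ² = algebraMap F K e, such that every element of K equals algebraMap F K x + (algebraMap F K y) * λ for some x, y ∈ F. Let σ : K ≃ₐ[F] K be an F-algebra automorphism with σ(λ) = -λ. Let M be a symmetric 2×2 matrix over F such that A := Ω₀⁻¹ * M has characteristic polynomial X² − C e, and let u : Fin 2 → K be a nonzero vector with (A mapped entrywise into K).mulVec u = λ • u. Then for all a, b ∈ F the following are equivalent: (i) there exists a symplectic matrix S over F with Sᵀ * M * S = !![a, 0; 0, b]; (ii) e = −(a*b) and there exist x, y ∈ F such that 2 * λ * algebraMap F K a = (algebraMap F K (x² − e*y²)) * w, where w := u 0 * σ(u 1) − u 1 * σ(u 0) is the symplectic pairing uᵀ * Ω₀ * (σ ∘ u) computed in K. -/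

import Mathlib

open Matrix Polynomial

/-!
Write `ω(v, v') = v₀ v'₁ - v₁ v'₀`, `w = ω(u, σu)` and `N z = z σ(z)` for the norm of `K/F`.
Since `σ` changes the sign of both `λ` and `w`, `r = 2λ / w` lies in `F`, and the eigenvector
equations for `u` and `σu` give `sᵀ M s = r · N(ω(s, σu))` for every `s ∈ F²`. As `w ≠ 0`
(`λ ∉ F`), `s ↦ ω(s, σu)` maps `F²` onto `K`, so `M` represents `a` exactly when `r a` is a norm,
which is condition (ii) on `a`.

A 2×2 matrix is symplectic iff its determinant is one; so `M` is symplectically congruent to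
`diag(a, b)` iff `det M = ab` and `M` represents `a` (the first column of the congruence), and
`det M = -e` because `Ω₀⁻¹ M` has characteristic polynomial `X² - e`.
-/

/-- The standard symplectic 2×2 matrix. -/
def Omega2 (F : Type*) [Zero F] [One F] [Neg F] : Matrix (Fin 2) (Fin 2) F :=
  !![0, 1; -1, 0]

lemma eq_of_transpose_eq_fin_two {α : Type*} {M : Matrix (Fin 2) (Fin 2) α} (hM : Mᵀ = M) :
    M = !![M 0 0, M 0 1; M 0 1, M 1 1] := by
  have h10 : M 1 0 = M 0 1 := by simpa using congrFun (congrFun hM 0) 1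
  exact (eta_fin_two M).trans (by rw [h10])

section TwoByTwo

variable {R : Type*} [CommRing R]

lemma Omega2_inv : (Omega2 R)⁻¹ = !![0, -1; 1, 0] :=
  inv_eq_right_inv (by simp [Omega2, one_fin_two])

lemma transpose_mul_Omega2_mul (S : Matrix (Fin 2) (Fin 2) R) :
    Sᵀ * Omega2 R * S = S.det • Omega2 R := by
  ext i j
  fin_cases i <;> fin_cases j <;> simp [Omega2, det_fin_two, mul_apply, Fin.sum_univ_two] <;> ring

lemma transpose_mul_Omega2_mul_eq_self_iff [Nontrivial R] (S : Matrix (Fin 2) (Fin 2) R) :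
    Sᵀ * Omega2 R * S = Omega2 R ↔ S.det = 1 := by
  rw [transpose_mul_Omega2_mul]
  exact ⟨fun h => by simpa [Omega2] using congrFun (congrFun h 0) 1,
    fun h => by rw [h, one_smul]⟩

lemma Omega2_inv_mul (m n p q : R) : (Omega2 R)⁻¹ * !![m, n; p, q] = !![-p, -q; m, n] := by
  rw [Omega2_inv, mul_fin_two]
  simp

lemma det_eq_neg_of_charpoly_eq [Nontrivial R] {A : Matrix (Fin 2) (Fin 2) R} {e : R}
    (h : A.charpoly = X ^ 2 - C e) : A.det = -e := by
  simp [det_eq_sign_charpoly_coeff, h]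

end TwoByTwo

section BinaryForm

variable {F : Type*} [Field F]

lemma exists_det_eq_one_transpose_mul_mul_eq_diag {m n p a b : F} (ha : a ≠ 0)
    (hab : m * p - n * n = a * b) {s : Fin 2 → F} (hs : s ⬝ᵥ !![m, n; n, p] *ᵥ s = a) :
    ∃ S : Matrix (Fin 2) (Fin 2) F, S.det = 1 ∧ Sᵀ * !![m, n; n, p] * S = !![a, 0; 0, b] := by
  simp only [dotProduct, mulVec, Fin.sum_univ_two, of_apply, cons_val', cons_val_zero,
    cons_val_one, empty_val', cons_val_fin_one, Fin.isValue] at hs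
  refine ⟨!![s 0, -(n * s 0 + p * s 1) / a; s 1, (m * s 0 + n * s 1) / a], ?_, ?_⟩
  · rw [det_fin_two_of]
    field_simp
    linear_combination hs
  · ext i j
    fin_cases i <;> fin_cases j <;> simp [mul_apply, Fin.sum_univ_two] <;> field_simp
    · linear_combination hs
    · ring
    · ring
    · linear_combination a * hab + (m * p - n * n) * hs

theorem exists_symplectic_transpose_mul_mul_eq_diag_iff {m n p : F} (hdet : m * p - n * n ≠ 0)
    (a b : F) :
    (∃ S : Matrix (Fin 2) (Fin 2) F,
        Sᵀ * Omega2 F * S = Omega2 F ∧ Sᵀ * !![m, n; n, p] * S = !![a, 0; 0, b]) ↔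
      m * p - n * n = a * b ∧ ∃ s : Fin 2 → F, s ⬝ᵥ !![m, n; n, p] *ᵥ s = a := by
  simp_rw [transpose_mul_Omega2_mul_eq_self_iff]
  constructor
  · rintro ⟨S, hS, hSM⟩
    refine ⟨?_, fun i => S i 0, ?_⟩
    · simpa [hS, det_fin_two_of] using congrArg det hSM
    · have h00 := congrFun (congrFun hSM 0) 0
      simp only [Fin.isValue, mul_apply, transpose_apply, of_apply, cons_val', cons_val_fin_one,
        Fin.sum_univ_two, cons_val_zero, cons_val_one, dotProduct, mulVec] at h00 ⊢
      linear_combination h00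
  · rintro ⟨hab, s, hs⟩
    have ha : a ≠ 0 := by rintro rfl; exact hdet (by rw [hab, zero_mul])
    exact exists_det_eq_one_transpose_mul_mul_eq_diag ha hab hs

end BinaryForm

section QuadraticExtension

variable {F K : Type*} [Field F] [Field K] [Algebra F K] {e : F} {lam : K} {σ : K ≃ₐ[F] K}
  {u : Fin 2 → K}

lemma ne_algebraMap_of_sq_eq (he : ¬ IsSquare e) (hlam : lam ^ 2 = algebraMap F K e) (t : F) :
    lam ≠ algebraMap F K t := by
  rintro rfl
  exact he ⟨t, (algebraMap F K).injective (by rw [← hlam, map_mul, sq])⟩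

lemma apply_algebraMap_add_mul (hσ : σ lam = -lam) (x y : F) :
    σ (algebraMap F K x + algebraMap F K y * lam) =
      algebraMap F K x - algebraMap F K y * lam := by
  rw [map_add, map_mul, AlgEquiv.commutes, AlgEquiv.commutes, hσ, mul_neg, sub_eq_add_neg]

lemma apply_apply_of_forall_eq_add_mul
    (hK : ∀ z : K, ∃ x y : F, z = algebraMap F K x + algebraMap F K y * lam)
    (hσ : σ lam = -lam) (z : K) : σ (σ z) = z := by
  obtain ⟨x, y, rfl⟩ := hK z
  simp only [map_add, map_mul, AlgEquiv.commutes, hσ, map_neg, neg_neg]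

lemma mem_range_of_apply_eq (h2 : (2 : K) ≠ 0) (hlam0 : lam ≠ 0)
    (hK : ∀ z : K, ∃ x y : F, z = algebraMap F K x + algebraMap F K y * lam)
    (hσ : σ lam = -lam) {z : K} (hz : σ z = z) : z ∈ Set.range (algebraMap F K) := by
  obtain ⟨x, y, rfl⟩ := hK z
  rw [apply_algebraMap_add_mul hσ] at hz
  have hy : algebraMap F K y = 0 := by
    have : 2 * lam * algebraMap F K y = 0 := by linear_combination -hz
    simpa [h2, hlam0] using this
  exact ⟨x, by rw [hy, zero_mul, add_zero]⟩

lemma add_mul_mul_sub_mul (hlam : lam ^ 2 = algebraMap F K e) (x y : F) :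
    (algebraMap F K x + algebraMap F K y * lam) * (algebraMap F K x - algebraMap F K y * lam) =
      algebraMap F K (x ^ 2 - e * y ^ 2) := by
  simp only [map_sub, map_mul, map_pow]
  linear_combination -(algebraMap F K y) ^ 2 * hlam

lemma pairing_ne_zero_of_mulVec_eq_smul (A : Matrix (Fin 2) (Fin 2) F)
    (hlamF : ∀ t : F, lam ≠ algebraMap F K t)
    (hfix : ∀ z : K, σ z = z → z ∈ Set.range (algebraMap F K)) (hu : u ≠ 0)
    (huA : (A.map (algebraMap F K)) *ᵥ u = lam • u) :
    u 0 * σ (u 1) - u 1 * σ (u 0) ≠ 0 := by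
  have h0 := congrFun huA 0
  have h1 := congrFun huA 1
  simp only [mulVec, dotProduct, Fin.sum_univ_two, map_apply, Pi.smul_apply, smul_eq_mul] at h0 h1
  have hu0 : u 0 ≠ 0 := by
    intro hu0
    have hu1 : u 1 ≠ 0 := fun hu1 => hu (funext fun i => by fin_cases i <;> assumption)
    refine hlamF (A 1 1) (mul_right_cancel₀ hu1 ?_)
    linear_combination -h1 + algebraMap F K (A 1 0) * hu0
  intro hw
  obtain ⟨t, ht⟩ := hfix (u 1 / u 0) (by
    rw [map_div₀, div_eq_div_iff ((map_ne_zero σ).mpr hu0) hu0]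
    linear_combination hw)
  rw [eq_div_iff hu0] at ht
  refine hlamF (A 0 0 + A 0 1 * t) (mul_right_cancel₀ hu0 ?_)
  rw [map_add, map_mul]
  linear_combination -h0 - algebraMap F K (A 0 1) * ht

lemma quadForm_mul_pairing (hσ : σ lam = -lam) {m n p : F}
    (huA : (((Omega2 F)⁻¹ * !![m, n; n, p]).map (algebraMap F K)) *ᵥ u = lam • u)
    (s : Fin 2 → F) :
    algebraMap F K (s ⬝ᵥ !![m, n; n, p] *ᵥ s) * (u 0 * σ (u 1) - u 1 * σ (u 0)) =
      2 * lam * ((algebraMap F K (s 0) * σ (u 1) - algebraMap F K (s 1) * σ (u 0)) *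
        (algebraMap F K (s 0) * u 1 - algebraMap F K (s 1) * u 0)) := by
  rw [Omega2_inv_mul] at huA
  have h0 := congrFun huA 0
  have h1 := congrFun huA 1
  simp only [mulVec, dotProduct, Fin.sum_univ_two, map_apply, of_apply, cons_val', cons_val_zero,
    cons_val_one, empty_val', cons_val_fin_one, Fin.isValue, Pi.smul_apply, smul_eq_mul,
    map_neg] at h0 h1
  have hσ0 := congrArg σ h0
  have hσ1 := congrArg σ h1
  simp only [map_add, map_mul, map_neg, AlgEquiv.commutes, hσ] at hσ0 hσ1
  simp only [dotProduct, mulVec, Fin.sum_univ_two, of_apply, cons_val', cons_val_zero,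
    cons_val_one, empty_val', cons_val_fin_one, Fin.isValue, map_add, map_mul]
  set x0 := algebraMap F K (s 0)
  set x1 := algebraMap F K (s 1)
  linear_combination x0 ^ 2 * (σ (u 1) * h1 - u 1 * hσ1) + x1 ^ 2 * (σ (u 0) * h0 - u 0 * hσ0)
    + x0 * x1 * (-σ (u 1) * h0 + u 0 * hσ1 - σ (u 0) * h1 + u 1 * hσ0)

lemma exists_pairing_eq (hσ2 : ∀ z : K, σ (σ z) = z)
    (hfix : ∀ z : K, σ z = z → z ∈ Set.range (algebraMap F K))
    (hw : u 0 * σ (u 1) - u 1 * σ (u 0) ≠ 0) (z : K) :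
    ∃ s : Fin 2 → F, algebraMap F K (s 0) * σ (u 1) - algebraMap F K (s 1) * σ (u 0) = z := by
  set α := z / (u 0 * σ (u 1) - u 1 * σ (u 0))
  have htrace : ∀ i, α * u i + σ (α * u i) ∈ Set.range (algebraMap F K) := fun i =>
    hfix _ (by rw [map_add, hσ2, add_comm])
  choose s hs using htrace
  refine ⟨s, ?_⟩
  rw [hs, hs, map_mul, map_mul]
  calc (α * u 0 + σ α * σ (u 0)) * σ (u 1) - (α * u 1 + σ α * σ (u 1)) * σ (u 0)
      = α * (u 0 * σ (u 1) - u 1 * σ (u 0)) := by ring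
    _ = z := div_mul_cancel₀ z hw

lemma exists_quadForm_eq_mul_pairing_mul_apply (hσ2 : ∀ z : K, σ (σ z) = z)
    (hfix : ∀ z : K, σ z = z → z ∈ Set.range (algebraMap F K)) (hσ : σ lam = -lam)
    (hw : u 0 * σ (u 1) - u 1 * σ (u 0) ≠ 0) {m n p : F}
    (huA : (((Omega2 F)⁻¹ * !![m, n; n, p]).map (algebraMap F K)) *ᵥ u = lam • u) :
    ∃ r : F, algebraMap F K r * (u 0 * σ (u 1) - u 1 * σ (u 0)) = 2 * lam ∧
      ∀ s : Fin 2 → F, algebraMap F K (s ⬝ᵥ !![m, n; n, p] *ᵥ s) =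
        algebraMap F K r * ((algebraMap F K (s 0) * σ (u 1) - algebraMap F K (s 1) * σ (u 0)) *
          σ (algebraMap F K (s 0) * σ (u 1) - algebraMap F K (s 1) * σ (u 0))) := by
  set w := u 0 * σ (u 1) - u 1 * σ (u 0) with hw_def
  have hσw : σ w = -w := by
    rw [hw_def, map_sub, map_mul, map_mul, hσ2, hσ2]
    ring
  obtain ⟨r, hr⟩ : 2 * lam / w ∈ Set.range (algebraMap F K) := hfix _ (by
    rw [map_div₀, map_mul, hσ, hσw, map_ofNat, mul_neg, neg_div_neg_eq])
  have hrw : algebraMap F K r * w = 2 * lam := by rw [hr, div_mul_cancel₀ _ hw]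
  refine ⟨r, hrw, fun s => mul_right_cancel₀ hw ?_⟩
  rw [quadForm_mul_pairing hσ huA s, ← hrw, map_sub, map_mul, map_mul, hσ2, hσ2,
    AlgEquiv.commutes, AlgEquiv.commutes]
  ring

theorem exists_quadForm_eq_iff (h2 : (2 : K) ≠ 0) (he : ¬ IsSquare e)
    (hlam : lam ^ 2 = algebraMap F K e)
    (hK : ∀ z : K, ∃ x y : F, z = algebraMap F K x + algebraMap F K y * lam)
    (hσ : σ lam = -lam) {m n p : F} (hu : u ≠ 0)
    (huA : (((Omega2 F)⁻¹ * !![m, n; n, p]).map (algebraMap F K)) *ᵥ u = lam • u) (a : F) :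
    (∃ s : Fin 2 → F, s ⬝ᵥ !![m, n; n, p] *ᵥ s = a) ↔
      ∃ x y : F, 2 * lam * algebraMap F K a =
        algebraMap F K (x ^ 2 - e * y ^ 2) * (u 0 * σ (u 1) - u 1 * σ (u 0)) := by
  have hσ2 := apply_apply_of_forall_eq_add_mul hK hσ
  have hlamF := ne_algebraMap_of_sq_eq he hlam
  have hlam0 : lam ≠ 0 := by simpa using hlamF 0
  have hfix : ∀ z : K, σ z = z → z ∈ Set.range (algebraMap F K) :=
    fun _ => mem_range_of_apply_eq h2 hlam0 hK hσ
  have hw := pairing_ne_zero_of_mulVec_eq_smul _ hlamF hfix hu huA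
  obtain ⟨r, hrw, hnorm⟩ := exists_quadForm_eq_mul_pairing_mul_apply hσ2 hfix hσ hw huA
  have hr0 : algebraMap F K r ≠ 0 := by
    rintro h
    rw [h, zero_mul] at hrw
    exact mul_ne_zero h2 hlam0 hrw.symm
  constructor
  · rintro ⟨s, rfl⟩
    obtain ⟨x, y, hxy⟩ := hK (algebraMap F K r *
      (algebraMap F K (s 0) * σ (u 1) - algebraMap F K (s 1) * σ (u 0)))
    refine ⟨x, y, ?_⟩
    rw [← add_mul_mul_sub_mul hlam, ← apply_algebraMap_add_mul hσ, ← hxy, hnorm, ← hrw, map_mul,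
      AlgEquiv.commutes]
    ring
  · rintro ⟨x, y, hxy⟩
    set γ := algebraMap F K x + algebraMap F K y * lam
    have hra : algebraMap F K r * algebraMap F K a = γ * σ γ := by
      rw [apply_algebraMap_add_mul hσ, add_mul_mul_sub_mul hlam]
      refine mul_right_cancel₀ hw ?_
      rw [← hxy, ← hrw]
      ring
    obtain ⟨s, hs⟩ := exists_pairing_eq hσ2 hfix hw (γ / algebraMap F K r)
    refine ⟨s, (algebraMap F K).injective ?_⟩
    rw [hnorm, hs, map_div₀, AlgEquiv.commutes]
    field_simp
    exact hra.symm

end QuadraticExtension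

/-- Criterion for a symmetric 2×2 matrix whose associated matrix `A = Ω₀⁻¹M` has
eigenvalues `±λ` in a quadratic extension `K = F[λ]`, `λ² = e` a non-square of `F`,
to be symplectically equivalent to the diagonal form `!![a, 0; 0, b]`. -/
theorem elliptic_normal_form_iff
    (F K : Type*) [Field F] [Field K] [Algebra F K]
    (hchar : ringChar F ≠ 2)
    (e : F) (he : ¬ IsSquare e)
    (lam : K) (hlam : lam ^ 2 = algebraMap F K e)
    (hK : ∀ z : K, ∃ x y : F, z = algebraMap F K x + algebraMap F K y * lam)
    (σ : K ≃ₐ[F] K) (hσ : σ lam = -lam)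
    (M : Matrix (Fin 2) (Fin 2) F) (hM : Mᵀ = M)
    (hchp : ((Omega2 F)⁻¹ * M).charpoly = X ^ 2 - C e)
    (u : Fin 2 → K) (hu : u ≠ 0)
    (huA : (((Omega2 F)⁻¹ * M).map (algebraMap F K)).mulVec u = lam • u)
    (a b : F) :
    (∃ S : Matrix (Fin 2) (Fin 2) F,
        Sᵀ * Omega2 F * S = Omega2 F ∧ Sᵀ * M * S = !![a, 0; 0, b]) ↔
    (e = -(a * b) ∧ ∃ x y : F,
        2 * lam * algebraMap F K a =
          algebraMap F K (x ^ 2 - e * y ^ 2) * (u 0 * σ (u 1) - u 1 * σ (u 0))) := by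
  have h2 : (2 : K) ≠ 0 := by
    simpa only [map_ofNat] using (map_ne_zero (algebraMap F K)).mpr (Ring.two_ne_zero hchar)
  have he0 : e ≠ 0 := by rintro rfl; exact he (IsSquare.zero)
  obtain ⟨m, n, p, rfl⟩ : ∃ m n p, M = !![m, n; n, p] := ⟨_, _, _, eq_of_transpose_eq_fin_two hM⟩
  have hdet : m * p - n * n = -e := by
    rw [← det_eq_neg_of_charpoly_eq hchp, Omega2_inv_mul, det_fin_two_of]
    ring
  rw [exists_symplectic_transpose_mul_mul_eq_diag_iff (hdet ▸ neg_ne_zero.mpr he0),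
    exists_quadForm_eq_iff h2 he hlam hK hσ hu huA, hdet, neg_eq_iff_eq_neg]
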